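/- (Doubilet's inversion formula.) Let λ = (λ_1, …, λ_ℓ) ⊢ n be a partition with ℓ = ℓ(λ) parts. Then for every w ∈ 𝔖_n, χ^λ(w) = Σ_σ sgn(σ) ζ^{σλ~}(w), where the sum runs over all permutations σ ∈ 𝔖_n fixing every point i > ℓ and satisfying λ_i + σ(i) − i ≥ 0 for all i ≤ ℓ, the sequence σλ is defined by (σλ)_i = λ_i + σ(i) − i, and σλ~ is the partition of n obtained by arranging the nonzero entries of σλ in weakly decreasing order. -/

import Mathlib

open scoped Classical

/-- A finset `s ⊆ Fin n` is a cycle (orbit) of the permutation `w`;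
fixed points count as cycles of length 1. -/
def IsCycleSetOf {n : ℕ} (w : Equiv.Perm (Fin n)) (s : Finset (Fin n)) : Prop :=
  ∃ x : Fin n, ∀ y : Fin n, y ∈ s ↔ w.SameCycle x y

/-- The finset of cycles (orbits) of `w`, fixed points included as 1-cycles. -/
noncomputable def cyclesOf {n : ℕ} (w : Equiv.Perm (Fin n)) : Finset (Finset (Fin n)) :=
  Finset.univ.filter (IsCycleSetOf w)

/-- `cycCount w i` is `c_i(w)`, the number of cycles of `w` of length `i`. -/
noncomputable def cycCount {n : ℕ} (w : Equiv.Perm (Fin n)) (i : ℕ) : ℕ :=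
  ((cyclesOf w).filter fun s => s.card = i).card

/-- The cycle type of `w` as a multiset, fixed points included as parts equal to 1. -/
noncomputable def fullCycleType {n : ℕ} (w : Equiv.Perm (Fin n)) : Multiset ℕ :=
  (cyclesOf w).val.map Finset.card

/-- `zeta w lam` is `ζ^lam(w)`, the number of ordered brick tilings of the
composition/partition `lam` (given as a list of parts) by `w`:  tuples
`(S_1, …, S_r)` of pairwise disjoint sets of cycles of `w` such that the lengths of the
cycles in `S_j` sum to `lam_j`. -/
noncomputable def zeta {n : ℕ} (w : Equiv.Perm (Fin n)) (lam : List ℕ) : ℕ :=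
  Nat.card {L : Fin lam.length → Finset (Finset (Fin n)) //
    (∀ i, ∀ c ∈ L i, c ∈ cyclesOf w) ∧
    (∀ i j, i ≠ j → Disjoint (L i) (L j)) ∧
    ∀ i, (L i).sum Finset.card = lam.get i}

/-- `xi w mu` is `ξ^mu(w)`, the number of unordered brick tilings of `mu`
(a multiset of parts) by `w`: sets of pairwise disjoint nonempty sets of cycles of `w`
whose multiset of total lengths is `mu`. -/
noncomputable def xi {n : ℕ} (w : Equiv.Perm (Fin n)) (mu : Multiset ℕ) : ℕ :=
  Nat.card {T : Finset (Finset (Finset (Fin n))) //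
    (∀ S ∈ T, ∀ c ∈ S, c ∈ cyclesOf w) ∧
    (∀ S ∈ T, S.Nonempty) ∧
    ((T : Set (Finset (Finset (Fin n)))).Pairwise Disjoint) ∧
    T.val.map (fun S => S.sum Finset.card) = mu}

/-- `eta w mu` is `η^mu(w)`, the number of unordered crackless brick tilings of `mu`
by `w`: sets of distinct cycles of `w` whose multiset of lengths is `mu`. -/
noncomputable def eta {n : ℕ} (w : Equiv.Perm (Fin n)) (mu : Multiset ℕ) : ℕ :=
  Nat.card {T : Finset (Finset (Fin n)) //
    (∀ c ∈ T, c ∈ cyclesOf w) ∧ T.val.map Finset.card = mu}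

/-- The irreducible character value `χ^lam(w)` defined via Frobenius's formula:
the coefficient of `x_1^{lam_1+ℓ-1} ⋯ x_ℓ^{lam_ℓ}` in
`∏_{i<j}(x_i - x_j) · ∏_{cycles c of w} (x_1^{|c|} + ⋯ + x_ℓ^{|c|})`. -/
noncomputable def chiFrob {n : ℕ} (w : Equiv.Perm (Fin n)) (lam : List ℕ) : ℤ :=
  MvPolynomial.coeff
    (Finsupp.equivFunOnFinite.symm fun i : Fin lam.length =>
      lam.get i + (lam.length - 1 - (i : ℕ)))
    ((∏ p ∈ Finset.univ.filter (fun p : Fin lam.length × Fin lam.length => p.1 < p.2),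
        (MvPolynomial.X p.1 - MvPolynomial.X p.2)) *
      ∏ c ∈ cyclesOf w, ∑ i : Fin lam.length,
        (MvPolynomial.X i : MvPolynomial (Fin lam.length) ℤ) ^ c.card)

/-!
Expanding the Vandermonde factor as `∑_τ sgn τ ∏ᵢ xᵢ^(ℓ-1-τ(i))`, the coefficient of
`x^(λ+δ)`, `δ = (ℓ-1, …, 1, 0)`, in the `τ`-term is the coefficient of `x^(τλ)` in `∏_c (x₁^|c| + ⋯ + x_ℓ^|c|)`, where
`(τλ)ᵢ = λᵢ + τ(i) - i`: the number of ways to colour the cycles of `w` so that the cycles of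
colour `i` have total length `(τλ)ᵢ`. As every cycle has positive length, this count depends only
on the multiset of nonzero targets, and when the targets sum to `n` it is the number of ordered
brick tilings. Permutations of `Fin ℓ` are then identified with the permutations of `Fin n` fixing
every `i ≥ ℓ`.
-/

open Finset MvPolynomial

section Cycles

variable {n : ℕ} {w : Equiv.Perm (Fin n)}

lemma mem_cyclesOf {s : Finset (Fin n)} : s ∈ cyclesOf w ↔ IsCycleSetOf w s := by
  simp [cyclesOf]

lemma card_pos_of_mem_cyclesOf {s : Finset (Fin n)} (hs : s ∈ cyclesOf w) : 0 < s.card := by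
  obtain ⟨x, hx⟩ := mem_cyclesOf.1 hs
  exact card_pos.2 ⟨x, (hx x).2 (Equiv.Perm.SameCycle.refl w x)⟩

lemma disjoint_of_mem_cyclesOf {s t : Finset (Fin n)} (hs : s ∈ cyclesOf w)
    (ht : t ∈ cyclesOf w) (hst : s ≠ t) : Disjoint s t := by
  obtain ⟨x, hx⟩ := mem_cyclesOf.1 hs
  obtain ⟨y, hy⟩ := mem_cyclesOf.1 ht
  refine disjoint_left.2 fun a has hat => hst ?_
  have hxy : w.SameCycle x y := ((hx a).1 has).trans ((hy a).1 hat).symm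
  ext z
  rw [hx z, hy z]
  exact ⟨hxy.symm.trans, hxy.trans⟩

variable (w) in
lemma sum_card_cyclesOf : ∑ c ∈ cyclesOf w, c.card = n := by
  have hcover : (cyclesOf w).biUnion (fun s => s) = univ := by
    refine eq_univ_iff_forall.2 fun y => mem_biUnion.2 ⟨univ.filter (w.SameCycle y), ?_, ?_⟩
    · exact mem_cyclesOf.2 ⟨y, fun z => by simp⟩
    · simp [Equiv.Perm.SameCycle.refl]
  rw [← card_biUnion fun s hs t ht hst => disjoint_of_mem_cyclesOf hs ht hst, hcover,
    card_univ, Fintype.card_fin]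

end Cycles

section FiberSumCount

variable {ι τ τ' : Type*} [Fintype ι]

noncomputable def fiberSumCount [DecidableEq τ] (h : ι → ℕ) (μ : τ → ℕ) : ℕ :=
  Nat.card {f : ι → τ // ∀ i, ∑ c ∈ univ.filter (fun c => f c = i), h c = μ i}

lemma fiberSumCount_congr [DecidableEq τ] [DecidableEq τ'] (h : ι → ℕ) {μ : τ → ℕ}
    {μ' : τ' → ℕ} (e : τ ≃ τ') (he : ∀ i, μ' (e i) = μ i) :
    fiberSumCount h μ = fiberSumCount h μ' := by
  refine Nat.card_congr (((Equiv.refl ι).arrowCongr e).subtypeEquiv fun f => ?_)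
  refine e.forall_congr fun {i} => ?_
  simp [he]

lemma fiberSumCount_subtype [DecidableEq τ] {h : ι → ℕ} (hh : ∀ c, 0 < h c) {μ : τ → ℕ}
    {p : τ → Prop} (hp : ∀ i, ¬p i → μ i = 0) :
    fiberSumCount h (fun i : Subtype p => μ i) = fiberSumCount h μ := by
  have hmem : ∀ g : ι → τ, (∀ i, ∑ c ∈ univ.filter (fun c => g c = i), h c = μ i) →
      ∀ c, p (g c) := by
    intro g hg c
    by_contra hc
    have hpos : 0 < ∑ c' ∈ univ.filter (fun c' => g c' = g c), h c' :=
      sum_pos' (fun _ _ => Nat.zero_le _) ⟨c, by simp, hh c⟩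
    rw [hg, hp _ hc] at hpos
    exact lt_irrefl _ hpos
  refine Nat.card_eq_of_bijective (fun f => ⟨fun c => f.1 c, fun i => ?_⟩) ⟨?_, ?_⟩
  · by_cases hi : p i
    · simpa [Subtype.ext_iff] using f.2 ⟨i, hi⟩
    · rw [hp i hi]
      refine sum_eq_zero fun c hc => absurd ?_ hi
      rw [(mem_filter.1 hc).2.symm]
      exact (f.1 c).2
  · intro f g hfg
    ext c : 2
    exact Subtype.ext (congrFun (congrArg Subtype.val hfg) c)
  · intro g
    exact ⟨⟨fun c => ⟨g.1 c, hmem _ g.2 c⟩, fun i => by simpa [Subtype.ext_iff] using g.2 i⟩, rfl⟩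

lemma coeff_prod_sum_X_pow [Fintype τ] [DecidableEq τ] (h : ι → ℕ) (μ : τ → ℕ) :
    coeff (Finsupp.equivFunOnFinite.symm μ)
      (∏ c : ι, ∑ i : τ, (X i : MvPolynomial τ ℤ) ^ h c) = fiberSumCount h μ := by
  have hterm : ∀ f : ι → τ, coeff (Finsupp.equivFunOnFinite.symm μ)
      (∏ c, (X (f c) : MvPolynomial τ ℤ) ^ h c) =
        if ∀ i, ∑ c ∈ univ.filter (fun c => f c = i), h c = μ i then 1 else 0 := by
    intro f
    simp_rw [X_pow_eq_monomial, ← monomial_sum_one, coeff_monomial, Finsupp.ext_iff,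
      Finsupp.finsetSum_apply, Finsupp.single_apply, ← sum_filter]
    rfl
  rw [Fintype.prod_sum, coeff_sum, sum_congr rfl fun f _ => hterm f, sum_boole, fiberSumCount,
    Nat.card_eq_fintype_card, Fintype.card_subtype]

lemma exists_equiv_apply_eq_of_map_univ_eq {α β γ : Type*} [Fintype α] [Fintype β]
    {f : α → γ} {g : β → γ} (h : univ.val.map f = univ.val.map g) :
    ∃ e : α ≃ β, ∀ a, g (e a) = f a := by
  have hcard : ∀ c, Fintype.card {a // f a = c} = Fintype.card {b // g b = c} := by
    intro c
    have := congrArg (Multiset.count c) h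
    simp only [Multiset.count_map] at this
    simpa [Fintype.card_subtype, Finset.card, Finset.filter_val, eq_comm] using this
  exact ⟨Equiv.ofFiberEquiv fun c => Fintype.equivOfCardEq (hcard c), Equiv.ofFiberEquiv_map _⟩

end FiberSumCount

section Zeta

variable {n : ℕ} {w : Equiv.Perm (Fin n)}

lemma exists_mem_of_sum_card_eq {ι : Type*} [Fintype ι] {L : ι → Finset (Finset (Fin n))}
    (hL : ∀ i, ∀ c ∈ L i, c ∈ cyclesOf w) (hdisj : ∀ i j, i ≠ j → Disjoint (L i) (L j))
    (hsum : ∑ i, (L i).sum card = n) {c : Finset (Fin n)} (hc : c ∈ cyclesOf w) :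
    ∃ i, c ∈ L i := by
  by_contra! hne
  have hsub : univ.biUnion L ⊆ (cyclesOf w).erase c := fun d hd => by
    obtain ⟨i, -, hdi⟩ := mem_biUnion.1 hd
    exact mem_erase.2 ⟨fun h => hne i (h ▸ hdi), hL i d hdi⟩
  have hle : n ≤ ∑ d ∈ (cyclesOf w).erase c, d.card :=
    calc n = ∑ d ∈ univ.biUnion L, d.card :=
          hsum.symm.trans (sum_biUnion fun i _ j _ hij => hdisj i j hij).symm
      _ ≤ _ := sum_le_sum_of_subset hsub
  have := sum_erase_add _ card hc
  rw [sum_card_cyclesOf] at this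
  have := card_pos_of_mem_cyclesOf hc
  omega

lemma zeta_eq_fiberSumCount (m : List ℕ) (hm : m.sum = n) :
    zeta w m = fiberSumCount (fun c : {c // c ∈ cyclesOf w} => c.1.card) m.get := by
  let tiling : ({c // c ∈ cyclesOf w} → Fin m.length) → Fin m.length → Finset (Finset (Fin n)) :=
    fun f i => (univ.filter (fun c => f c = i)).map (Function.Embedding.subtype _)
  have mem_tiling : ∀ f i c, c ∈ tiling f i ↔ ∃ hc : c ∈ cyclesOf w, f ⟨c, hc⟩ = i := by
    simp [tiling]
  have tiling_disjoint : ∀ f i j, i ≠ j → Disjoint (tiling f i) (tiling f j) :=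
    fun f i j hij => (disjoint_map _).2 (disjoint_filter_filter' _ _ fun g hi hj c hc =>
      hij ((hi c hc).symm.trans (hj c hc)))
  refine (Nat.card_eq_of_bijective (fun f => ⟨tiling f.1,
    fun i c hc => ((mem_tiling _ i c).1 hc).1, tiling_disjoint f.1,
    fun i => by rw [sum_map]; exact f.2 i⟩) ⟨?_, ?_⟩).symm
  · intro f g hfg
    ext c : 2
    have hc : c.1 ∈ tiling f.1 (f.1 c) := (mem_tiling _ _ _).2 ⟨c.2, rfl⟩
    rw [show tiling f.1 = tiling g.1 from congrArg Subtype.val hfg] at hc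
    exact ((mem_tiling _ _ _).1 hc).2.symm
  · rintro ⟨L, hL, hdisj, hsum⟩
    have hsum' : ∑ i, (L i).sum card = n := by
      simp_rw [hsum]
      rw [← List.sum_ofFn, List.ofFn_get, hm]
    choose f hf using fun c : {c // c ∈ cyclesOf w} =>
      exists_mem_of_sum_card_eq hL hdisj hsum' c.2
    have htiling : tiling f = L := by
      funext i
      ext d
      refine (mem_tiling _ _ _).trans ⟨fun ⟨hd, hfd⟩ => hfd ▸ hf _, fun hd => ⟨hL i d hd, ?_⟩⟩
      by_contra hne
      exact disjoint_left.1 (hdisj _ _ hne) (hf _) hd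
    refine ⟨⟨f, fun i => ?_⟩, Subtype.ext htiling⟩
    rw [← hsum i, ← htiling, sum_map]
    rfl

lemma zeta_eq_fiberSumCount_of_perm {k : ℕ} {ν : Fin k → ℕ} (hν : ∑ i, ν i = n) {m : List ℕ}
    (hm : m.Perm ((List.ofFn ν).filter (· ≠ 0))) :
    zeta w m = fiberSumCount (fun c : {c // c ∈ cyclesOf w} => c.1.card) ν := by
  have hsupport : univ.val.map (fun i : {i // ν i ≠ 0} => ν i) =
      (univ.filter (ν · ≠ 0)).val.map ν :=
    univ_val_map_subtype_restrict ν _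
  have hmult : univ.val.map (fun i : {i // ν i ≠ 0} => ν i) = univ.val.map m.get := by
    rw [hsupport, Fin.univ_val_map, List.ofFn_get, Multiset.coe_eq_coe.2 hm,
      ← Multiset.filter_coe, ← Fin.univ_val_map, Multiset.filter_map]
    rfl
  have hsum : m.sum = n := by
    rw [← Multiset.sum_coe, ← List.ofFn_get m, ← Fin.univ_val_map, ← hmult, hsupport,
      ← Finset.sum_eq_multiset_sum, sum_filter_ne_zero, hν]
  obtain ⟨e, he⟩ := exists_equiv_apply_eq_of_map_univ_eq hmult
  rw [zeta_eq_fiberSumCount m hsum, ← fiberSumCount_congr _ e he,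
    fiberSumCount_subtype (fun c => card_pos_of_mem_cyclesOf c.2) fun i hi => not_not.1 hi]

end Zeta

lemma prod_filter_lt_eq_prod_Ioi {ℓ : ℕ} {M : Type*} [CommMonoid M] (F : Fin ℓ → Fin ℓ → M) :
    ∏ p ∈ univ.filter (fun p : Fin ℓ × Fin ℓ => p.1 < p.2), F p.1 p.2 =
      ∏ i, ∏ j ∈ Ioi i, F i j := by
  rw [prod_filter, ← univ_product_univ, prod_product]
  refine prod_congr rfl fun i _ => ?_
  rw [← prod_filter]
  congr 1
  ext j
  simp

lemma prod_sub_eq_sum_sign_smul_prod_pow {R : Type*} [CommRing R] {ℓ : ℕ} (v : Fin ℓ → R) :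
    ∏ p ∈ univ.filter (fun p : Fin ℓ × Fin ℓ => p.1 < p.2), (v p.1 - v p.2) =
      ∑ τ : Equiv.Perm (Fin ℓ), (Equiv.Perm.sign τ : ℤ) • ∏ i, v i ^ ((τ i).rev : ℕ) := by
  have hdet := Matrix.det_projVandermonde 1 v
  simp only [Pi.one_apply, one_mul] at hdet
  rw [prod_filter_lt_eq_prod_Ioi (fun i j => v i - v j), ← hdet, ← Matrix.det_transpose,
    Matrix.det_apply]
  simp [Units.smul_def, Matrix.projVandermonde_apply]

lemma chiFrob_eq_sum_sign_mul {n : ℕ} (w : Equiv.Perm (Fin n)) (lam : List ℕ) :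
    chiFrob w lam = ∑ τ : Equiv.Perm (Fin lam.length), (Equiv.Perm.sign τ : ℤ) *
      if ∀ i : Fin lam.length, (i : ℕ) ≤ lam.get i + τ i then
        (fiberSumCount (fun c : {c // c ∈ cyclesOf w} => c.1.card)
          (fun i => lam.get i + τ i - i) : ℤ)
      else 0 := by
  rw [chiFrob, prod_sub_eq_sum_sign_smul_prod_pow, sum_mul, coeff_sum]
  refine sum_congr rfl fun τ _ => ?_
  rw [smul_mul_assoc, coeff_smul, smul_eq_mul]
  congr 1
  have hmonomial : ∏ i, (X i : MvPolynomial (Fin lam.length) ℤ) ^ ((τ i).rev : ℕ) =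
      monomial (Finsupp.equivFunOnFinite.symm fun i => ((τ i).rev : ℕ)) 1 := by
    simp_rw [X_pow_eq_monomial, ← monomial_sum_one, ← Finsupp.equivFunOnFinite_symm_eq_sum]
  rw [hmonomial, coeff_monomial_mul', one_mul, ← prod_coe_sort (cyclesOf w)]
  refine if_congr ?_ ?_ rfl
  · refine Finsupp.le_def.trans (forall_congr' fun i => ?_)
    simp only [Finsupp.coe_equivFunOnFinite_symm, Fin.val_rev]
    have := (τ i).isLt
    omega
  · have hdiff : ((Finsupp.equivFunOnFinite.symm fun i => lam.get i + (lam.length - 1 - i)) -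
        Finsupp.equivFunOnFinite.symm fun i => ((τ i).rev : ℕ)) =
        Finsupp.equivFunOnFinite.symm fun i => lam.get i + τ i - i := by
      ext i
      simp only [Finsupp.tsub_apply, Finsupp.coe_equivFunOnFinite_symm, Fin.val_rev]
      have := (τ i).isLt
      omega
    rw [hdiff, coeff_prod_sum_X_pow]

lemma sum_extendDomain_eq_sum_filter {α β M : Type*} [Fintype α] [Fintype β] [DecidableEq α]
    [DecidableEq β] [AddCommMonoid M] {p : β → Prop} [DecidablePred p]
    [DecidablePred fun σ : Equiv.Perm β => ∀ b, ¬p b → σ b = b] (f : α ≃ Subtype p)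
    (F : Equiv.Perm β → M) :
    ∑ τ : Equiv.Perm α, F (τ.extendDomain f) =
      ∑ σ ∈ univ.filter (fun σ : Equiv.Perm β => ∀ b, ¬p b → σ b = b), F σ := by
  rw [sum_subtype _ (p := fun σ : Equiv.Perm β => ∀ b, ¬p b → σ b = b) fun σ => by simp]
  refine Fintype.sum_equiv (f.permCongr.trans (Equiv.Perm.subtypeEquivSubtypePerm p)) _ _
    fun τ => congrArg F (Equiv.ext fun b => ?_)
  by_cases hb : p b
  · simp [Equiv.Perm.ofSubtype_apply_of_mem _ hb, Equiv.Perm.extendDomain_apply_subtype _ _ hb]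
  · simp [Equiv.Perm.ofSubtype_apply_of_not_mem _ hb,
      Equiv.Perm.extendDomain_apply_not_subtype _ _ hb]

lemma sum_add_apply_sub_eq_sum {k : ℕ} (f : Fin k → ℕ) (τ : Equiv.Perm (Fin k))
    (h : ∀ i : Fin k, (i : ℕ) ≤ f i + τ i) : ∑ i, (f i + τ i - i) = ∑ i, f i := by
  have hadd : ∑ i, (f i + τ i - i) + ∑ i : Fin k, (i : ℕ) =
      ∑ i, f i + ∑ i, ((τ i : Fin k) : ℕ) := by
    rw [← sum_add_distrib, ← sum_add_distrib]
    exact sum_congr rfl fun i _ => Nat.sub_add_cancel (h i)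
  rw [Equiv.sum_comp τ (fun i => (i : ℕ))] at hadd
  omega

lemma filter_ofFn_ne_zero_castLE {ℓ n : ℕ} (h : ℓ ≤ n) (ν : Fin n → ℕ)
    (hν : ∀ i : Fin n, ℓ ≤ i → ν i = 0) :
    (List.ofFn ν).filter (· ≠ 0) =
      (List.ofFn fun j : Fin ℓ => ν (Fin.castLE h j)).filter (· ≠ 0) := by
  obtain ⟨k, rfl⟩ := Nat.exists_eq_add_of_le h
  have htail : (List.ofFn fun j : Fin k => ν (Fin.natAdd ℓ j)).filter (· ≠ 0) = [] := by
    simp [fun j : Fin k => hν (Fin.natAdd ℓ j) (Nat.le_add_right ℓ j)]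
  rw [List.ofFn_add, List.filter_append, htail, List.append_nil]

lemma ite_sign_mul_zeta_extendDomain {n : ℕ} (w : Equiv.Perm (Fin n)) {lam : List ℕ}
    (hsum : lam.sum = n) (hln : lam.length ≤ n) (τ : Equiv.Perm (Fin lam.length)) :
    (if ∀ i : Fin n, (i : ℕ) < lam.length →
        (i : ℕ) ≤ lam.getD i 0 + (τ.extendDomain (Fin.castLEquiv hln) i : ℕ) then
      (Equiv.Perm.sign (τ.extendDomain (Fin.castLEquiv hln)) : ℤ) *
        zeta w (List.insertionSort (· ≥ ·) ((List.ofFn fun i : Fin n =>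
          lam.getD i 0 + (τ.extendDomain (Fin.castLEquiv hln) i : ℕ) - i).filter fun a => a ≠ 0))
    else 0) =
      (Equiv.Perm.sign τ : ℤ) * if ∀ i : Fin lam.length, (i : ℕ) ≤ lam.get i + τ i then
        (fiberSumCount (fun c : {c // c ∈ cyclesOf w} => c.1.card)
          (fun i => lam.get i + τ i - i) : ℤ)
      else 0 := by
  set σ := τ.extendDomain (Fin.castLEquiv hln)
  have hσ : ∀ j : Fin lam.length, (σ (Fin.castLE hln j) : ℕ) = τ j := fun j =>
    congrArg Fin.val (τ.extendDomain_apply_image (Fin.castLEquiv hln) j)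
  have hfix : ∀ i : Fin n, lam.length ≤ i → σ i = i := fun i hi =>
    τ.extendDomain_apply_not_subtype _ (not_lt.2 hi)
  have hadm : (∀ i : Fin n, (i : ℕ) < lam.length → (i : ℕ) ≤ lam.getD i 0 + (σ i : ℕ)) ↔
      ∀ j : Fin lam.length, (j : ℕ) ≤ lam.get j + τ j := by
    refine ⟨fun h j => ?_, fun h i hi => ?_⟩
    · simpa [hσ] using h (Fin.castLE hln j) j.isLt
    · simpa [← hσ, hi] using h ⟨i, hi⟩
  have hlist : (List.ofFn fun i : Fin n => lam.getD i 0 + (σ i : ℕ) - i).filter (· ≠ 0) =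
      (List.ofFn fun j : Fin lam.length => lam.get j + τ j - j).filter (· ≠ 0) := by
    rw [filter_ofFn_ne_zero_castLE hln _ fun i hi => by simp [hfix i hi, hi]]
    congr
    funext j
    simp [hσ]
  rw [Equiv.Perm.sign_extendDomain, hlist]
  by_cases h : ∀ j : Fin lam.length, (j : ℕ) ≤ lam.get j + τ j
  · have hμ : ∑ j, (lam.get j + τ j - j) = n := by
      rw [sum_add_apply_sub_eq_sum _ τ h, ← hsum]
      simp
    rw [if_pos (hadm.2 h), if_pos h,
      zeta_eq_fiberSumCount_of_perm hμ (List.perm_insertionSort _ _)]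
  · rw [if_neg (mt hadm.1 h), if_neg h, mul_zero]

theorem stmt11_general (n : ℕ) (lam : List ℕ)
    (hpos : ∀ p ∈ lam, 0 < p) (hsum : lam.sum = n) (w : Equiv.Perm (Fin n)) :
    chiFrob w lam =
      ∑ σ ∈ Finset.univ.filter (fun σ : Equiv.Perm (Fin n) =>
          (∀ i : Fin n, lam.length ≤ (i : ℕ) → σ i = i) ∧
          ∀ i : Fin n, (i : ℕ) < lam.length → (i : ℕ) ≤ lam.getD (i : ℕ) 0 + ((σ i : ℕ))),
        (Equiv.Perm.sign σ : ℤ) *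
          zeta w (List.insertionSort (· ≥ ·)
            ((List.ofFn fun i : Fin n =>
              lam.getD (i : ℕ) 0 + ((σ i : ℕ)) - (i : ℕ)).filter fun a => a ≠ 0)) := by
  have hln : lam.length ≤ n := hsum ▸ lam.length_le_sum_of_one_le hpos
  rw [chiFrob_eq_sum_sign_mul, ← filter_filter, sum_filter,
    filter_congr fun σ _ => forall_congr' fun i => imp_congr_left Nat.not_lt.symm]
  refine Eq.trans ?_ (sum_extendDomain_eq_sum_filter (Fin.castLEquiv hln) _)
  exact sum_congr rfl fun τ _ => (ite_sign_mul_zeta_extendDomain w hsum hln τ).symm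

theorem stmt11 (n : ℕ) (lam : List ℕ) (hsort : lam.Pairwise (· ≥ ·))
    (hpos : ∀ p ∈ lam, 0 < p) (hsum : lam.sum = n) (w : Equiv.Perm (Fin n)) :
    chiFrob w lam =
      ∑ σ ∈ Finset.univ.filter (fun σ : Equiv.Perm (Fin n) =>
          (∀ i : Fin n, lam.length ≤ (i : ℕ) → σ i = i) ∧
          ∀ i : Fin n, (i : ℕ) < lam.length → (i : ℕ) ≤ lam.getD (i : ℕ) 0 + ((σ i : ℕ))),
        (Equiv.Perm.sign σ : ℤ) *
          zeta w (List.insertionSort (· ≥ ·)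
            ((List.ofFn fun i : Fin n =>
              lam.getD (i : ℕ) 0 + ((σ i : ℕ)) - (i : ℕ)).filter fun a => a ≠ 0)) :=
  stmt11_general n lam hpos hsum w
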